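/- Every terminal Petri net language is generated by a regular expression controlled by balanced semaphores: for every labelled place/transition Petri net Π over an alphabet Σ with initial marking M₀ and final marking M_f, there exist n ∈ ℕ and a regular expression E over Σ ∪ Ω_n, where Ω_n = {σ₁,…,σₙ, ω₁,…,ωₙ} is disjoint from Σ, such that T(Π, M₀, M_f) = { h(x) : x ∈ L(E) and h̄(x) ∈ C₀(n) }, where C₀(n) ⊆ Ω_n* is the [0]-counter semaphore language, h erases all Ω_n-symbols from a word, and h̄ erases all Σ-symbols. -/

import Mathlib

/-- A labelled place/transition Petri net with places `P`, transitions `T`, and labels in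
`A ∪ {λ}` (modelled by `Option A`, with `none` the silent label λ). -/
structure LabelledPetriNet (P T A : Type) where
  pre : T → P → ℕ
  post : T → P → ℕ
  label : T → Option A

namespace LabelledPetriNet

variable {P T A : Type}

/-- A transition `t` is enabled at marking `M` if every place holds enough marks. -/
def Enabled (N : LabelledPetriNet P T A) (M : P → ℕ) (t : T) : Prop :=
  ∀ p, N.pre t p ≤ M p

/-- Firing a transition `t` at marking `M`. -/
def fire (N : LabelledPetriNet P T A) (M : P → ℕ) (t : T) : P → ℕ :=
  fun p => M p - N.pre t p + N.post t p

/-- `N.FiringSeq M s M'` : the sequence of transitions `s` can be successively fired from the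
marking `M`, leading to the marking `M'`. -/
inductive FiringSeq (N : LabelledPetriNet P T A) : (P → ℕ) → List T → (P → ℕ) → Prop
  | nil (M : P → ℕ) : FiringSeq N M [] M
  | cons {M M' : P → ℕ} {t : T} {ts : List T} :
      N.Enabled M t → FiringSeq N (N.fire M t) ts M' → FiringSeq N M (t :: ts) M'

/-- The label word of a firing sequence: the labels of its transitions with the silent
labels deleted. -/
def labelWord (N : LabelledPetriNet P T A) (s : List T) : List A :=
  s.filterMap N.label

/-- The Petri net language `L(Π, M₀)`: label words of all firing sequences from `M₀`. -/
def lang (N : LabelledPetriNet P T A) (M₀ : P → ℕ) : Language A :=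
  { w | ∃ s M, N.FiringSeq M₀ s M ∧ N.labelWord s = w }

/-- The terminal Petri net language `T(Π, M₀, M_f)`: label words of all firing sequences
leading from `M₀` exactly to `M_f`. -/
def terminalLang (N : LabelledPetriNet P T A) (M₀ Mf : P → ℕ) : Language A :=
  { w | ∃ s, N.FiringSeq M₀ s Mf ∧ N.labelWord s = w }

end LabelledPetriNet

/-- The synchronization alphabet `Ω_n = {σ₁,…,σₙ, ω₁,…,ωₙ}`: the pair `(i, true)` is the
increment symbol `σᵢ` and `(i, false)` is the decrement symbol `ωᵢ`. -/
abbrev Omega (n : ℕ) : Type := Fin n × Bool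

/-- The `[0]`-counter semaphore language `C₀(n)`: words over `Ω_n` such that for every `i`,
every prefix contains at least as many `σᵢ`'s as `ωᵢ`'s, and the totals are equal. -/
def C0 (n : ℕ) : Language (Omega n) :=
  { v | ∀ i : Fin n,
      (∀ p, p <+: v → p.count (i, false) ≤ p.count (i, true)) ∧
      v.count (i, true) = v.count (i, false) }

/-- The homomorphism `h` erasing all `Ω_n`-symbols of a word over `Σ ∪ Ω_n`. -/
def eraseOmega {A : Type} {n : ℕ} (x : List (A ⊕ Omega n)) : List A :=
  x.filterMap Sum.getLeft?

/-- The homomorphism `h̄` erasing all `Σ`-symbols of a word over `Σ ∪ Ω_n`. -/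
def eraseSigma {A : Type} {n : ℕ} (x : List (A ⊕ Omega n)) : List (Omega n) :=
  x.filterMap Sum.getRight?

/-! Give every place a semaphore. A transition `t` is written as its label followed by
`ω`-symbols for `pre t` and `σ`-symbols for `post t`; a firing sequence `t₁ ⋯ tₖ` from `M₀` to `Mf`
becomes `σ^M₀ · code t₁ ⋯ code tₖ · ω^Mf`. After each prefix the semaphore of a place holds the
current number of tokens on it, so the prefix condition of `C₀(n)` is exactly enabledness, and the
final balance is exactly reaching `Mf`. All such words, firable or not, form the regular language
`σ^M₀ (∑ₜ code t)* ω^Mf`. -/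

theorem List.prefix_append_iff {α : Type*} {p u v : List α} :
    p <+: u ++ v ↔ p <+: u ∨ ∃ q, q <+: v ∧ p = u ++ q := by
  constructor
  · intro h
    rcases List.prefix_or_prefix_of_prefix h (u.prefix_append v) with hpu | ⟨q, rfl⟩
    · exact .inl hpu
    · exact .inr ⟨q, (List.prefix_append_right_inj u).1 h, rfl⟩
  · rintro (h | ⟨q, hq, rfl⟩)
    · exact h.trans (u.prefix_append v)
    · exact (List.prefix_append_right_inj u).2 hq

namespace RegularExpression

variable {α : Type*}

def ofWord (w : List α) : RegularExpression α :=
  (w.map char).prod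

theorem mem_matches'_ofWord {w x : List α} : x ∈ (ofWord w).matches' ↔ x = w := by
  induction w generalizing x with
  | nil => exact Language.mem_one x
  | cons a w ih =>
    simp only [ofWord, List.map_cons, List.prod_cons, matches'_mul, matches'_char,
      Language.mem_mul] at ih ⊢
    simp only [ih]
    constructor
    · rintro ⟨_, rfl, _, rfl, rfl⟩
      rfl
    · rintro rfl
      exact ⟨[a], rfl, w, rfl, rfl⟩

theorem mem_matches'_sum {rs : List (RegularExpression α)} {x : List α} :
    x ∈ rs.sum.matches' ↔ ∃ r ∈ rs, x ∈ r.matches' := by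
  induction rs with
  | nil => simp [matches'_zero, Language.notMem_zero]
  | cons r rs ih => simp [matches'_add, Language.mem_add, ih]

theorem mem_matches'_star_sum_ofWord {ι : Type*} [Fintype ι] (f : ι → List α) {x : List α} :
    x ∈ (Finset.univ.toList.map (ofWord ∘ f)).sum.star.matches' ↔
      ∃ s : List ι, x = s.flatMap f := by
  simp only [matches'_star, Language.mem_kstar, mem_matches'_sum, List.mem_map,
    Finset.mem_toList, Finset.mem_univ, true_and, exists_exists_eq_and, Function.comp_apply,
    mem_matches'_ofWord]
  constructor
  · rintro ⟨L, rfl, hL⟩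
    obtain ⟨s, rfl⟩ : L ∈ Set.range (List.map f) := by
      rw [Set.range_list_map]
      intro y hy
      obtain ⟨i, rfl⟩ := hL y hy
      exact ⟨i, rfl⟩
    exact ⟨s, List.flatMap_def.symm⟩
  · rintro ⟨s, rfl⟩
    refine ⟨s.map f, List.flatMap_def, ?_⟩
    simp

end RegularExpression

section Counters

variable {ι : Type*} [DecidableEq ι]

/-- `(i, true)` increments counter `i` and `(i, false)` decrements it: `v`, started at `g`, never
drives a counter below zero and ends at `g'`. -/
def IsRun (g : ι → ℕ) (v : List (ι × Bool)) (g' : ι → ℕ) : Prop :=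
  ∀ i, (∀ p, p <+: v → p.count (i, false) ≤ g i + p.count (i, true)) ∧
    g i + v.count (i, true) = g' i + v.count (i, false)

theorem mem_C0_iff_isRun {n : ℕ} {v : List (Omega n)} : v ∈ C0 n ↔ IsRun 0 v 0 := by
  simp only [IsRun, Pi.zero_apply, zero_add]
  rfl

theorem isRun_nil_iff {g g' : ι → ℕ} : IsRun g [] g' ↔ g = g' := by
  simp [IsRun, funext_iff]

theorem isRun_append_iff {g g'' : ι → ℕ} {u v : List (ι × Bool)} :
    IsRun g (u ++ v) g'' ↔ ∃ g', IsRun g u g' ∧ IsRun g' v g'' := by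
  constructor
  · intro h
    have hu i := (h i).1 u (u.prefix_append v)
    refine ⟨fun i => g i + u.count (i, true) - u.count (i, false), fun i => ?_, fun i => ?_⟩
    all_goals dsimp only
    · exact ⟨fun p hp => (h i).1 p (hp.trans (u.prefix_append v)), by have := hu i; omega⟩
    · have := hu i
      have huv := (h i).2
      refine ⟨fun q hq => ?_, ?_⟩
      · have := (h i).1 (u ++ q) ((List.prefix_append_right_inj u).2 hq)
        simp only [List.count_append] at this
        omega
      · simp only [List.count_append] at huv
        omega
  · rintro ⟨g', hu, hv⟩ i
    obtain ⟨hup, huc⟩ := hu i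
    obtain ⟨hvp, hvc⟩ := hv i
    refine ⟨fun p hp => ?_, by simp only [List.count_append]; omega⟩
    rcases List.prefix_append_iff.1 hp with hp | ⟨q, hq, rfl⟩
    · exact hup p hp
    · have := hup u List.prefix_rfl
      have := hvp q hq
      simp only [List.count_append]
      omega

variable [Fintype ι]

noncomputable def counterWord (g : ι → ℕ) (b : Bool) : List (ι × Bool) :=
  Finset.univ.toList.flatMap fun i => List.replicate (g i) (i, b)

@[simp]
theorem count_counterWord (g : ι → ℕ) (b c : Bool) (j : ι) :
    (counterWord g b).count (j, c) = if b = c then g j else 0 := by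
  simp [counterWord, List.count_flatMap, Finset.sum_map_toList, List.count_replicate, ite_and]

theorem isRun_counterWord_false_iff {g a g' : ι → ℕ} :
    IsRun g (counterWord a false) g' ↔ a ≤ g ∧ g' = g - a := by
  simp only [IsRun, count_counterWord, if_true, Bool.false_eq_true, if_false, add_zero,
    Pi.le_def, funext_iff, Pi.sub_apply]
  constructor
  · intro h
    have hle i : a i ≤ g i := by simpa using (h i).1 _ List.prefix_rfl
    exact ⟨hle, fun i => by have := (h i).2; have := hle i; omega⟩
  · rintro ⟨hle, hg'⟩ i
    refine ⟨fun p hp => ?_, by rw [hg' i]; have := hle i; omega⟩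
    have := hp.sublist.count_le (i, false)
    rw [count_counterWord, if_pos rfl] at this
    exact (this.trans (hle i)).trans (Nat.le_add_right _ _)

theorem isRun_counterWord_true_iff {g b g' : ι → ℕ} :
    IsRun g (counterWord b true) g' ↔ g' = g + b := by
  simp only [IsRun, count_counterWord, if_true, Bool.true_eq_false, if_false, add_zero,
    funext_iff, Pi.add_apply]
  constructor
  · exact fun h i => ((h i).2).symm
  · intro hg' i
    refine ⟨fun p hp => ?_, (hg' i).symm⟩
    have := hp.sublist.count_le (i, false)
    simp only [count_counterWord, Bool.true_eq_false, if_false, Nat.le_zero] at this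
    simp [this]

theorem isRun_zero_counterWord_append_iff {g g' : ι → ℕ} {v : List (ι × Bool)} :
    IsRun 0 (counterWord g true ++ v ++ counterWord g' false) 0 ↔ IsRun g v g' := by
  simp only [isRun_append_iff, isRun_counterWord_true_iff, isRun_counterWord_false_iff,
    zero_add, exists_eq_left]
  constructor
  · rintro ⟨g'', hv, hle, hzero⟩
    rwa [le_antisymm (tsub_eq_zero_iff_le.1 hzero.symm) hle] at hv
  · exact fun hv => ⟨g', hv, le_rfl, (tsub_self g').symm⟩

end Counters

namespace LabelledPetriNet

variable {P T A : Type} (N : LabelledPetriNet P T A)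

theorem firingSeq_nil_iff {M M' : P → ℕ} : N.FiringSeq M [] M' ↔ M = M' := by
  constructor
  · rintro ⟨⟩
    rfl
  · rintro rfl
    exact .nil M

theorem firingSeq_cons_iff {M M' : P → ℕ} {t : T} {s : List T} :
    N.FiringSeq M (t :: s) M' ↔ N.Enabled M t ∧ N.FiringSeq (N.fire M t) s M' := by
  constructor
  · rintro (_ | ⟨hen, hs⟩)
    exact ⟨hen, hs⟩
  · exact fun ⟨hen, hs⟩ => .cons hen hs

theorem labelWord_eq_flatMap (s : List T) :
    N.labelWord s = s.flatMap fun t => (N.label t).toList :=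
  List.filterMap_eq_flatMap_toList _ _

section

variable {ι : Type*} [Fintype ι] [DecidableEq ι] (e : P ≃ ι)

noncomputable def transitionCode (t : T) : List (ι × Bool) :=
  counterWord (fun i => N.pre t (e.symm i)) false ++ counterWord (fun i => N.post t (e.symm i)) true

theorem isRun_transitionCode_iff {M : P → ℕ} {t : T} {g' : ι → ℕ} :
    IsRun (M ∘ e.symm) (N.transitionCode e t) g' ↔
      N.Enabled M t ∧ g' = N.fire M t ∘ e.symm := by
  simp only [transitionCode, isRun_append_iff, isRun_counterWord_false_iff,
    isRun_counterWord_true_iff, and_assoc, exists_and_left, exists_eq_left]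
  exact and_congr (Pi.le_def.trans (e.symm.forall_congr_right (q := fun p => N.pre t p ≤ M p)))
    Iff.rfl

theorem firingSeq_iff_isRun {M M' : P → ℕ} {s : List T} :
    N.FiringSeq M s M' ↔ IsRun (M ∘ e.symm) (s.flatMap (N.transitionCode e)) (M' ∘ e.symm) := by
  induction s generalizing M with
  | nil =>
    rw [firingSeq_nil_iff, List.flatMap_nil, isRun_nil_iff]
    exact e.symm.surjective.injective_comp_right.eq_iff.symm
  | cons t s ih =>
    rw [firingSeq_cons_iff, List.flatMap_cons, isRun_append_iff]
    simp only [isRun_transitionCode_iff, ih, and_assoc, exists_and_left, exists_eq_left]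

end

section

variable {n : ℕ} (e : P ≃ Fin n)

noncomputable def transitionWord (t : T) : List (A ⊕ Omega n) :=
  (N.label t).toList.map Sum.inl ++ (N.transitionCode e t).map Sum.inr

noncomputable def encodedRun (M₀ Mf : P → ℕ) (s : List T) : List (A ⊕ Omega n) :=
  (counterWord (M₀ ∘ e.symm) true).map Sum.inr ++ s.flatMap (N.transitionWord e) ++
    (counterWord (Mf ∘ e.symm) false).map Sum.inr

noncomputable def terminalRegex [Fintype T] (M₀ Mf : P → ℕ) : RegularExpression (A ⊕ Omega n) :=
  RegularExpression.ofWord ((counterWord (M₀ ∘ e.symm) true).map Sum.inr) *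
    (Finset.univ.toList.map (RegularExpression.ofWord ∘ N.transitionWord e)).sum.star *
    RegularExpression.ofWord ((counterWord (Mf ∘ e.symm) false).map Sum.inr)

theorem mem_terminalRegex_iff [Fintype T] {M₀ Mf : P → ℕ} {x : List (A ⊕ Omega n)} :
    x ∈ (N.terminalRegex e M₀ Mf).matches' ↔ ∃ s, N.encodedRun e M₀ Mf s = x := by
  simp only [terminalRegex, RegularExpression.matches'_mul, Language.mem_mul,
    RegularExpression.mem_matches'_ofWord, RegularExpression.mem_matches'_star_sum_ofWord,
    encodedRun]
  constructor
  · rintro ⟨_, ⟨_, rfl, _, ⟨s, rfl⟩, rfl⟩, _, rfl, rfl⟩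
    exact ⟨s, rfl⟩
  · rintro ⟨s, rfl⟩
    exact ⟨_, ⟨_, rfl, _, ⟨s, rfl⟩, rfl⟩, _, rfl, rfl⟩

theorem eraseOmega_encodedRun (M₀ Mf : P → ℕ) (s : List T) :
    eraseOmega (N.encodedRun e M₀ Mf s) = N.labelWord s := by
  simp [eraseOmega, encodedRun, transitionWord, labelWord_eq_flatMap, List.filterMap_flatMap,
    List.filterMap_map, Function.comp_def]

theorem eraseSigma_encodedRun (M₀ Mf : P → ℕ) (s : List T) :
    eraseSigma (N.encodedRun e M₀ Mf s) =
      counterWord (M₀ ∘ e.symm) true ++ s.flatMap (N.transitionCode e) ++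
        counterWord (Mf ∘ e.symm) false := by
  simp [eraseSigma, encodedRun, transitionWord, List.filterMap_flatMap, List.filterMap_map,
    Function.comp_def]

theorem eraseSigma_encodedRun_mem_C0_iff {M₀ Mf : P → ℕ} {s : List T} :
    eraseSigma (N.encodedRun e M₀ Mf s) ∈ C0 n ↔ N.FiringSeq M₀ s Mf := by
  rw [eraseSigma_encodedRun, mem_C0_iff_isRun, isRun_zero_counterWord_append_iff,
    N.firingSeq_iff_isRun e]

end

end LabelledPetriNet

theorem terminal_petri_lang_is_recbs_lang_general {A : Type} {P T : Type}
    [Fintype P] [Fintype T] (N : LabelledPetriNet P T A) (M₀ Mf : P → ℕ) :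
    ∃ (n : ℕ) (E : RegularExpression (A ⊕ Omega n)),
      N.terminalLang M₀ Mf =
        { w | ∃ x ∈ E.matches', eraseOmega x = w ∧ eraseSigma x ∈ C0 n } := by
  let e := Fintype.equivFin P
  refine ⟨Fintype.card P, N.terminalRegex e M₀ Mf, Set.ext fun w => ⟨?_, ?_⟩⟩
  · rintro ⟨s, hs, rfl⟩
    exact ⟨N.encodedRun e M₀ Mf s, (N.mem_terminalRegex_iff e).2 ⟨s, rfl⟩,
      N.eraseOmega_encodedRun e M₀ Mf s, (N.eraseSigma_encodedRun_mem_C0_iff e).2 hs⟩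
  · rintro ⟨x, hx, rfl, hC⟩
    obtain ⟨s, rfl⟩ := (N.mem_terminalRegex_iff e).1 hx
    exact ⟨s, (N.eraseSigma_encodedRun_mem_C0_iff e).1 hC,
      (N.eraseOmega_encodedRun e M₀ Mf s).symm⟩

/-- Every terminal Petri net language is generated by a regular expression controlled by
balanced ([0]-counter) semaphores. -/
theorem terminal_petri_lang_is_recbs_lang {A : Type} [Fintype A] {P T : Type}
    [Fintype P] [Fintype T] (N : LabelledPetriNet P T A) (M₀ Mf : P → ℕ) :
    ∃ (n : ℕ) (E : RegularExpression (A ⊕ Omega n)),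
      N.terminalLang M₀ Mf =
        { w | ∃ x ∈ E.matches', eraseOmega x = w ∧ eraseSigma x ∈ C0 n } :=
  terminal_petri_lang_is_recbs_lang_general N M₀ Mf
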